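/- arXiv:1712.01331 — 2 statements merged into one kernel-verified Lean document; each statement's English description precedes it below -/
import Mathlib

section
/- Let τ be the Sol Laplacian τ(f) = e^{-2t} f_{xx} + e^{2t} f_{yy} + f_{tt}. The function f(x,y,t) = 8x⁵ − 40x³e^{-2t} + 15x e^{-4t} satisfies τ(f) = 0, and likewise f(x,y,t) = 16x⁶ − 120x⁴e^{-2t} + 90x²e^{-4t} − 5e^{-6t} satisfies τ(f) = 0. -/
noncomputable section

/-- Partial derivative in the first (x) coordinate. -/
def p1 (f : ℝ → ℝ → ℝ → ℂ) : ℝ → ℝ → ℝ → ℂ := fun x y t => deriv (fun s => f s y t) x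
/-- Partial derivative in the second (y) coordinate. -/
def p2 (f : ℝ → ℝ → ℝ → ℂ) : ℝ → ℝ → ℝ → ℂ := fun x y t => deriv (fun s => f x s t) y
/-- Partial derivative in the third (t) coordinate. -/
def p3 (f : ℝ → ℝ → ℝ → ℂ) : ℝ → ℝ → ℝ → ℂ := fun x y t => deriv (fun s => f x y s) t

/-- The Laplace-Beltrami operator of the Sol geometry:
`τ(f) = e^{-2t} f_xx + e^{2t} f_yy + f_tt`. -/
def solTau (f : ℝ → ℝ → ℝ → ℂ) : ℝ → ℝ → ℝ → ℂ := fun x y t =>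
  (Real.exp (-2*t) : ℂ) * p1 (p1 f) x y t
    + (Real.exp (2*t) : ℂ) * p2 (p2 f) x y t + p3 (p3 f) x y t

/-!
Substituting `u = e^{-2t}`, a function `f(x, y, t) = P(x, e^{-2t})` with `P` a polynomial
satisfies `∂ₜ f = -2u ∂ᵤP`, so `τ(f) = u · (P_xx + 4 P_u + 4u P_uu)` evaluated at `(x, e^{-2t})`.
Both functions of the theorem are of this form, and for them the polynomial in parentheses
vanishes identically.
-/

open MvPolynomial

theorem MvPolynomial.hasDerivAt_eval_update {𝕜 σ : Type*} [NontriviallyNormedField 𝕜]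
    [DecidableEq σ] (P : MvPolynomial σ 𝕜) (v : σ → 𝕜) (i : σ) (z : 𝕜) :
    HasDerivAt (fun w => eval (Function.update v i w) P)
      (eval (Function.update v i z) (pderiv i P)) z := by
  induction P using MvPolynomial.induction_on with
  | C a => simpa using hasDerivAt_const z a
  | add P Q hP hQ => simpa using hP.fun_add hQ
  | mul_X P j hP =>
    simp only [map_mul, eval_X]
    rcases eq_or_ne j i with rfl | hji
    · refine (hP.fun_mul (by simpa using hasDerivAt_id' z)).congr_deriv ?_
      simp only [Derivation.leibniz, pderiv_X_self, smul_eq_mul, mul_one, map_add, map_mul, eval_X,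
        Function.update_self]
      ring
    · refine (hP.fun_mul (by simpa [hji] using hasDerivAt_const z (v j))).congr_deriv ?_
      simp [pderiv_X_of_ne hji, hji, mul_comm]

@[simp]
lemma MvPolynomial.pderiv_ofNat {R σ : Type*} [CommSemiring R] (i : σ) (n : ℕ) [n.AtLeastTwo] :
    pderiv i (no_index (OfNat.ofNat n : MvPolynomial σ R)) = 0 := by
  rw [← Nat.cast_ofNat]
  exact (pderiv i).map_natCast n

def solPoly (P : MvPolynomial (Fin 2) ℂ) : ℝ → ℝ → ℝ → ℂ :=
  fun x _ t => eval ![(x : ℂ), (Real.exp (-2 * t) : ℂ)] P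

def reducedSolLaplacian (P : MvPolynomial (Fin 2) ℂ) : MvPolynomial (Fin 2) ℂ :=
  pderiv 0 (pderiv 0 P) + 4 * pderiv 1 P + 4 * X 1 * pderiv 1 (pderiv 1 P)

lemma p1_solPoly (P : MvPolynomial (Fin 2) ℂ) : p1 (solPoly P) = solPoly (pderiv 0 P) := by
  funext x y t
  set u : ℂ := (Real.exp (-2 * t) : ℂ)
  have hv : ∀ w, Function.update ![(x : ℂ), u] 0 w = ![w, u] := fun w => by
    ext i; fin_cases i <;> rfl
  have h := (P.hasDerivAt_eval_update ![(x : ℂ), u] 0 x).comp_ofReal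
  simp only [hv] at h
  exact h.deriv

lemma p2_eq_zero_of_indep_y (g : ℝ → ℝ → ℂ) : p2 (fun x _ t => g x t) = 0 := by
  funext x y t
  exact deriv_const y _

lemma p3_solPoly (P : MvPolynomial (Fin 2) ℂ) :
    p3 (solPoly P) = solPoly (-2 * X 1 * pderiv 1 P) := by
  funext x y t
  have hu : HasDerivAt (fun s : ℝ => (Real.exp (-2 * s) : ℂ)) (-2 * Real.exp (-2 * t)) t := by
    have := (((hasDerivAt_id t).const_mul (-2)).exp).ofReal_comp
    simpa [mul_comm] using this
  have hv : ∀ w, Function.update ![(x : ℂ), 0] 1 w = ![(x : ℂ), w] := fun w => by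
    ext i; fin_cases i <;> rfl
  have h := (P.hasDerivAt_eval_update ![(x : ℂ), 0] 1 _).comp t hu
  simp only [hv] at h
  refine h.deriv.trans ?_
  simp only [solPoly, map_mul, map_neg, eval_X, eval_ofNat, Matrix.cons_val_one,
    Matrix.cons_val_fin_one]
  push_cast
  ring

lemma solTau_solPoly (P : MvPolynomial (Fin 2) ℂ) :
    solTau (solPoly P) = solPoly (X 1 * reducedSolLaplacian P) := by
  have hyy : p2 (p2 (solPoly P)) = 0 := by
    rw [show p2 (solPoly P) = 0 from p2_eq_zero_of_indep_y _]
    exact p2_eq_zero_of_indep_y fun _ _ => 0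
  funext x y t
  simp only [solTau, p1_solPoly, p3_solPoly, hyy, reducedSolLaplacian, solPoly, map_add, map_mul,
    map_neg, Derivation.leibniz, pderiv_X_self, pderiv_ofNat, eval_X, eval_ofNat, smul_eq_mul,
    Matrix.cons_val_one, Matrix.cons_val_fin_one, Pi.zero_apply, map_one, map_zero]
  ring

lemma solTau_solPoly_eq_zero {P : MvPolynomial (Fin 2) ℂ} (hP : reducedSolLaplacian P = 0) :
    solTau (solPoly P) = fun _ _ _ => 0 := by
  rw [solTau_solPoly, hP, mul_zero]
  funext x y t
  simp [solPoly]

theorem sol_harmonic_deg5_deg6 :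
    solTau (fun x y t => 8 * (x : ℂ) ^ 5 - 40 * (x : ℂ) ^ 3 * (Real.exp (-2*t) : ℂ)
        + 15 * (x : ℂ) * (Real.exp (-4*t) : ℂ)) = (fun _ _ _ => (0 : ℂ))
    ∧
    solTau (fun x y t => 16 * (x : ℂ) ^ 6 - 120 * (x : ℂ) ^ 4 * (Real.exp (-2*t) : ℂ)
        + 90 * (x : ℂ) ^ 2 * (Real.exp (-4*t) : ℂ) - 5 * (Real.exp (-6*t) : ℂ))
      = (fun _ _ _ => (0 : ℂ)) := by
  have e4 (t : ℝ) : Real.exp (-4 * t) = Real.exp (-2 * t) ^ 2 := by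
    rw [← Real.exp_nat_mul]; ring_nf
  have e6 (t : ℝ) : Real.exp (-6 * t) = Real.exp (-2 * t) ^ 3 := by
    rw [← Real.exp_nat_mul]; ring_nf
  have h5 : (fun x y t : ℝ => 8 * (x : ℂ) ^ 5 - 40 * (x : ℂ) ^ 3 * (Real.exp (-2*t) : ℂ)
        + 15 * (x : ℂ) * (Real.exp (-4*t) : ℂ))
      = solPoly (8 * X 0 ^ 5 - 40 * X 0 ^ 3 * X 1 + 15 * X 0 * X 1 ^ 2) := by
    funext x y t
    rw [e4]
    simp [solPoly]
  have h6 : (fun x y t : ℝ => 16 * (x : ℂ) ^ 6 - 120 * (x : ℂ) ^ 4 * (Real.exp (-2*t) : ℂ)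
        + 90 * (x : ℂ) ^ 2 * (Real.exp (-4*t) : ℂ) - 5 * (Real.exp (-6*t) : ℂ))
      = solPoly (16 * X 0 ^ 6 - 120 * X 0 ^ 4 * X 1 + 90 * X 0 ^ 2 * X 1 ^ 2 - 5 * X 1 ^ 3) := by
    funext x y t
    rw [e4, e6]
    simp [solPoly]
  rw [h5, h6]
  constructor <;> apply solTau_solPoly_eq_zero <;>
    simp only [reducedSolLaplacian, map_add, map_sub, Derivation.leibniz, Derivation.leibniz_pow,
      pderiv_X_self, pderiv_X_of_ne zero_ne_one, pderiv_X_of_ne one_ne_zero, pderiv_ofNat,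
      Derivation.map_natCast, Derivation.map_one_eq_zero, map_zero, smul_eq_mul, nsmul_eq_mul] <;>
    ring
end
end

section
/- Let τ be the Sol Laplacian τ(f) = e^{-2t} f_{xx} + e^{2t} f_{yy} + f_{tt}. For a₂,a₃,b₂,b₃ ∈ ℂ, set h₂(x,y,t) = a₂(2x² − e^{-2t}) + a₃(2x³ − 3x e^{-2t}) and h₃(x,y,t) = b₂(2y² − e^{2t}) + b₃(2y³ − 3y e^{2t}). Then τ(h₂·h₃)(x,y,t) = −8(a₂ + 3a₃x)(b₂ + 3b₃y) and τ²(h₂·h₃) = 0. In particular, if a₂ + 3a₃x and b₂ + 3b₃y are not identically zero (e.g. (a₂,a₃) ≠ 0 and (b₂,b₃) ≠ 0), then h₂·h₃ is proper biharmonic on Sol. -/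
/-!
`h₂` depends only on `(x, t)` and `h₃` only on `(y, t)`, and both are harmonic: the spatial term
`e^{∓2t} ∂²` cancels `∂ₜ²` because `(±2)² = 4`. For such separated factors the Leibniz rule
`τ(fg) = τ(f) g + f τ(g) + 2⟨∇f, ∇g⟩` leaves only the cross term `2 ∂ₜh₂ ∂ₜh₃`, which is
`-8 (a₂ + 3a₃x)(b₂ + 3b₃y)`. This is affine in `x` and in `y` and independent of `t`, so `τ` kills it.
-/

noncomputable section

open Complex

section SolLaplacian

variable (F G : ℝ → ℝ → ℂ) (x y t : ℝ)

theorem solTau_apply_of_indep_snd :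
    solTau (fun x _ t => F x t) x y t
      = Real.exp (-2 * t) * deriv (deriv fun s => F s t) x + deriv (deriv (F x)) t := by
  simp [solTau, p1, p2, p3]

theorem solTau_apply_of_indep_fst :
    solTau (fun _ y t => G y t) x y t
      = Real.exp (2 * t) * deriv (deriv fun s => G s t) y + deriv (deriv (G y)) t := by
  simp [solTau, p1, p2, p3]

theorem solTau_mul_apply
    (hF : ∀ x, Differentiable ℝ (F x)) (hF' : ∀ x, Differentiable ℝ (deriv (F x)))
    (hG : ∀ y, Differentiable ℝ (G y)) (hG' : ∀ y, Differentiable ℝ (deriv (G y))) :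
    solTau (fun x y t => F x t * G y t) x y t
      = solTau (fun x _ t => F x t) x y t * G y t + F x t * solTau (fun _ y t => G y t) x y t
        + 2 * deriv (F x) t * deriv (G y) t := by
  have hd : deriv (fun s => F x s * G y s)
      = fun s => deriv (F x) s * G y s + F x s * deriv (G y) s :=
    funext fun s => deriv_fun_mul (hF x s) (hG y s)
  have hdd : deriv (deriv fun s => F x s * G y s) t
      = deriv (deriv (F x)) t * G y t + 2 * deriv (F x) t * deriv (G y) t
        + F x t * deriv (deriv (G y)) t := by
    rw [hd, deriv_fun_add ((hF' x t).fun_mul (hG y t)) ((hF x t).fun_mul (hG' y t)),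
      deriv_fun_mul (hF' x t) (hG y t), deriv_fun_mul (hF x t) (hG' y t)]
    ring
  rw [solTau_apply_of_indep_snd, solTau_apply_of_indep_fst]
  simp only [solTau, p1, p2, p3, deriv_mul_const_field, deriv_const_mul_field]
  rw [hdd]
  ring

end SolLaplacian

theorem hasDerivAt_ofReal_exp_mul (c t : ℝ) :
    HasDerivAt (fun s : ℝ => (Real.exp (c * s) : ℂ)) (c * Real.exp (c * t)) t := by
  simpa [mul_comm] using (((hasDerivAt_id t).const_mul c).exp).ofReal_comp

theorem hasDerivAt_ofReal_pow (n : ℕ) (x : ℝ) :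
    HasDerivAt (fun s : ℝ => (s : ℂ) ^ n) (n * (x : ℂ) ^ (n - 1)) x :=
  (hasDerivAt_pow n (x : ℂ)).comp_ofReal

/-- With `c = -2` this is `h₂`; with `c = 2`, read in `(y, t)`, it is `h₃`. -/
def solProfile (a b : ℂ) (c x t : ℝ) : ℂ :=
  a * (2 * (x : ℂ) ^ 2 - (Real.exp (c * t) : ℂ))
    + b * (2 * (x : ℂ) ^ 3 - 3 * (x : ℂ) * (Real.exp (c * t) : ℂ))

section solProfile

variable (a b : ℂ) (c x t : ℝ)

theorem deriv_solProfile_fst :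
    deriv (fun s => solProfile a b c s t)
      = fun x : ℝ => 4 * a * x + 6 * b * (x : ℂ) ^ 2 - 3 * b * Real.exp (c * t) := by
  funext x
  have h1 := hasDerivAt_ofReal_pow 1 x
  have h2 := hasDerivAt_ofReal_pow 2 x
  have h3 := hasDerivAt_ofReal_pow 3 x
  simp only [pow_one] at h1
  have H : HasDerivAt (fun s => solProfile a b c s t) _ x :=
    (((h2.const_mul 2).sub_const (Real.exp (c * t) : ℂ)).const_mul a).add
      (((h3.const_mul 2).sub ((h1.const_mul 3).mul_const (Real.exp (c * t) : ℂ))).const_mul b)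
  rw [H.deriv]
  push_cast
  ring

theorem deriv_deriv_solProfile_fst :
    deriv (deriv fun s => solProfile a b c s t) x = 4 * (a + 3 * b * x) := by
  have h1 := hasDerivAt_ofReal_pow 1 x
  have h2 := hasDerivAt_ofReal_pow 2 x
  simp only [pow_one] at h1
  have H : HasDerivAt (fun x : ℝ => 4 * a * x + 6 * b * (x : ℂ) ^ 2 - 3 * b * Real.exp (c * t))
      _ x :=
    ((h1.const_mul (4 * a)).add (h2.const_mul (6 * b))).sub_const (3 * b * Real.exp (c * t))
  rw [deriv_solProfile_fst, H.deriv]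
  push_cast
  ring

theorem hasDerivAt_solProfile_snd :
    HasDerivAt (solProfile a b c x) (-c * (a + 3 * b * x) * Real.exp (c * t)) t := by
  have hE := hasDerivAt_ofReal_exp_mul c t
  have H : HasDerivAt (solProfile a b c x) _ t :=
    ((hE.const_sub (2 * (x : ℂ) ^ 2)).const_mul a).add
      (((hE.const_mul (3 * (x : ℂ))).const_sub (2 * (x : ℂ) ^ 3)).const_mul b)
  exact H.congr_deriv (by ring)

theorem deriv_solProfile_snd :
    deriv (solProfile a b c x) = fun t => -c * (a + 3 * b * x) * Real.exp (c * t) :=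
  funext fun t => (hasDerivAt_solProfile_snd a b c x t).deriv

theorem deriv_deriv_solProfile_snd :
    deriv (deriv (solProfile a b c x)) t = -c ^ 2 * (a + 3 * b * x) * Real.exp (c * t) := by
  rw [deriv_solProfile_snd, ((hasDerivAt_ofReal_exp_mul c t).const_mul _).deriv]
  ring

theorem differentiable_solProfile_snd : Differentiable ℝ (solProfile a b c x) :=
  fun t => (hasDerivAt_solProfile_snd a b c x t).differentiableAt

theorem differentiable_deriv_solProfile_snd : Differentiable ℝ (deriv (solProfile a b c x)) := by
  rw [deriv_solProfile_snd]
  exact fun t => ((hasDerivAt_ofReal_exp_mul c t).const_mul _).differentiableAt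

theorem solProfile_harmonic (hc : c ^ 2 = 4) :
    Real.exp (c * t) * deriv (deriv fun s => solProfile a b c s t) x
      + deriv (deriv (solProfile a b c x)) t = 0 := by
  rw [deriv_deriv_solProfile_fst, deriv_deriv_solProfile_snd]
  have hc' : (c : ℂ) ^ 2 = 4 := by exact_mod_cast hc
  linear_combination (-(a + 3 * b * x) * Real.exp (c * t)) * hc'

end solProfile

theorem solTau_solProfile_mul (a₂ a₃ b₂ b₃ : ℂ) :
    solTau (fun x y t => solProfile a₂ a₃ (-2) x t * solProfile b₂ b₃ 2 y t)
      = fun (x y _ : ℝ) => -8 * (a₂ + 3 * a₃ * (x : ℂ)) * (b₂ + 3 * b₃ * (y : ℂ)) := by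
  funext x y t
  have hexp : (Real.exp (-2 * t) : ℂ) * Real.exp (2 * t) = 1 := by
    rw [← ofReal_mul, ← Real.exp_add]
    simp
  rw [solTau_mul_apply _ _ x y t (differentiable_solProfile_snd a₂ a₃ (-2))
      (differentiable_deriv_solProfile_snd a₂ a₃ (-2))
      (differentiable_solProfile_snd b₂ b₃ 2) (differentiable_deriv_solProfile_snd b₂ b₃ 2),
    solTau_apply_of_indep_snd, solTau_apply_of_indep_fst,
    solProfile_harmonic a₂ a₃ (-2) x t (by norm_num), solProfile_harmonic b₂ b₃ 2 y t (by norm_num),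
    deriv_solProfile_snd, deriv_solProfile_snd]
  simp only [ofReal_neg, ofReal_ofNat]
  linear_combination (-8 * (a₂ + 3 * a₃ * x) * (b₂ + 3 * b₃ * y)) * hexp

theorem deriv_const_add_mul_ofReal (α β : ℂ) : deriv (fun s : ℝ => α + β * s) = fun _ => β := by
  funext x
  simpa using ((hasDerivAt_id x).ofReal_comp.const_mul β).const_add α |>.deriv

theorem solTau_affine_mul (α β γ δ : ℂ) :
    solTau (fun x y _ => (α + β * x) * (γ + δ * y)) = fun _ _ _ => 0 := by
  funext x y t
  rw [solTau_mul_apply (fun x _ => α + β * x) (fun y _ => γ + δ * y) x y t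
      (fun _ => differentiable_const _) (fun _ => by simp)
      (fun _ => differentiable_const _) (fun _ => by simp),
    solTau_apply_of_indep_snd, solTau_apply_of_indep_fst]
  simp only [deriv_const_add_mul_ofReal, deriv_const', deriv_const]
  ring

theorem exists_add_mul_ofReal_ne_zero {a b : ℂ} (h : (a, b) ≠ (0, 0)) :
    ∃ x : ℝ, a + b * x ≠ 0 := by
  by_contra! H
  have ha : a = 0 := by simpa using H 0
  have hb : b = 0 := by simpa [ha] using H 1
  exact h (by rw [ha, hb])

theorem sol_product_biharmonic (a₂ a₃ b₂ b₃ : ℂ)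
    (h₂ h₃ : ℝ → ℝ → ℝ → ℂ)
    (hh₂ : h₂ = fun (x y t : ℝ) => a₂ * (2 * (x : ℂ) ^ 2 - (Real.exp (-2*t) : ℂ))
        + a₃ * (2 * (x : ℂ) ^ 3 - 3 * (x : ℂ) * (Real.exp (-2*t) : ℂ)))
    (hh₃ : h₃ = fun (x y t : ℝ) => b₂ * (2 * (y : ℂ) ^ 2 - (Real.exp (2*t) : ℂ))
        + b₃ * (2 * (y : ℂ) ^ 3 - 3 * (y : ℂ) * (Real.exp (2*t) : ℂ))) :
    solTau (fun (x y t : ℝ) => h₂ x y t * h₃ x y t)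
        = (fun (x y t : ℝ) => -8 * (a₂ + 3 * a₃ * (x : ℂ)) * (b₂ + 3 * b₃ * (y : ℂ)))
      ∧ solTau (solTau (fun (x y t : ℝ) => h₂ x y t * h₃ x y t)) = (fun _ _ _ => (0 : ℂ))
      ∧ (((a₂, a₃) ≠ (0, 0) ∧ (b₂, b₃) ≠ (0, 0)) →
          solTau (fun (x y t : ℝ) => h₂ x y t * h₃ x y t) ≠ fun _ _ _ => (0 : ℂ)) := by
  have hτ : solTau (fun x y t => h₂ x y t * h₃ x y t)
      = fun (x y t : ℝ) => -8 * (a₂ + 3 * a₃ * (x : ℂ)) * (b₂ + 3 * b₃ * (y : ℂ)) := by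
    subst hh₂ hh₃
    exact solTau_solProfile_mul a₂ a₃ b₂ b₃
  refine ⟨hτ, ?_, ?_⟩
  · have hsplit : (fun (x y _ : ℝ) => -8 * (a₂ + 3 * a₃ * (x : ℂ)) * (b₂ + 3 * b₃ * (y : ℂ)))
        = fun (x y _ : ℝ) => (-8 * a₂ + -24 * a₃ * (x : ℂ)) * (b₂ + 3 * b₃ * (y : ℂ)) := by
      funext x y t
      ring
    rw [hτ, hsplit, solTau_affine_mul]
  · rintro ⟨ha, hb⟩ hτ0
    obtain ⟨x, hx⟩ := exists_add_mul_ofReal_ne_zero (b := 3 * a₃) (by simpa using ha)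
    obtain ⟨y, hy⟩ := exists_add_mul_ofReal_ne_zero (b := 3 * b₃) (by simpa using hb)
    have h0 := congrFun (congrFun (congrFun (hτ.symm.trans hτ0) x) y) 0
    exact mul_ne_zero (mul_ne_zero (by norm_num) hx) hy h0
end
end
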